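/- Fix n ≥ 2, let G be a finite connected simple graph, ω : V(G) → Γ a placement function, and f : V(G) → V(C) a function satisfying conditions (C1) and (C2). Then there exists i* ∈ {0,…,n} such that for every vertex u of G with f(u) in the branch-star of C, ω(u) ≠ b(i*,t) for every t ∈ [0,1]. -/

import Mathlib

/-!
Suppose every index `i ∈ {0,…,n}` is hit, i.e. some vertex `uᵢ` with `f uᵢ` in the branch-star is
placed on the ray `b(i,·)`. By (C1) the values `f uᵢ` are pairwise distinct, so they exhaust the
`n + 1` vertices of the branch-star; in particular some `u_b` is mapped to the branch vertex while
being placed on a ray. By connectivity `u_b` has a neighbour `v`; by (C2) `f v` lies in the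
branch-star, so `f v = f u_d` for some `d`, and (C1) puts `v` on the ray of `u_d`. But the edge
`u_b v` of the placement has an endpoint at the origin, and it cannot be `u_b`.
-/

/-- Vertices of the infinite n-od graph `C`: a branch vertex, and nodes `C(ℓ,j)`
(intended for `1 ≤ ℓ ≤ n`, `j ≥ 1`). -/
inductive NOdVert : Type where
  | branch : NOdVert
  | node : ℕ → ℕ → NOdVert
deriving DecidableEq

/-- `cv ℓ j` denotes the vertex `C(ℓ,j)`, where `C(ℓ,0)` is the branch vertex. -/
def cv (ℓ j : ℕ) : NOdVert := if j = 0 then NOdVert.branch else NOdVert.node ℓ j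

/-- Adjacency in the infinite n-od `C`: `C(ℓ,j)` is adjacent to `C(ℓ,j+1)` for
`1 ≤ ℓ ≤ n` and `j ≥ 0` (the case `j = 0` gives branch–`C(ℓ,1)` edges). -/
def nodAdj (n : ℕ) (u v : NOdVert) : Prop :=
  ∃ ℓ j, 1 ≤ ℓ ∧ ℓ ≤ n ∧
    ((u = cv ℓ j ∧ v = cv ℓ (j + 1)) ∨ (v = cv ℓ j ∧ u = cv ℓ (j + 1)))

/-- The point `b(i,t) = ((1+t)cos(iπ/n), (1+t)sin(iπ/n))` in the plane. -/
noncomputable def bpt (n i : ℕ) (t : ℝ) : ℝ × ℝ :=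
  ((1 + t) * Real.cos (i * Real.pi / n), (1 + t) * Real.sin (i * Real.pi / n))

/-- The origin `o` of the plane. -/
def origin : ℝ × ℝ := (0, 0)

/-- A placement function: on each edge of `G`, one endpoint maps to `o` and the
other to some `b(i,t)` with `i ∈ {0,…,n}`, `t ∈ [0,1]`. -/
def IsPlacement {V : Type*} (n : ℕ) (G : SimpleGraph V) (ω : V → ℝ × ℝ) : Prop :=
  ∀ u v, G.Adj u v →
    (ω u = origin ∧ ∃ i ≤ n, ∃ t ∈ Set.Icc (0 : ℝ) 1, ω v = bpt n i t) ∨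
    (ω v = origin ∧ ∃ i ≤ n, ∃ t ∈ Set.Icc (0 : ℝ) 1, ω u = bpt n i t)

/-- Condition (C1). -/
def CondC1 {V : Type*} (n : ℕ) (ω : V → ℝ × ℝ) (f : V → NOdVert) : Prop :=
  ∀ u v, f u = f v →
    (ω u = origin ∧ ω v = origin) ∨
    ∃ i ≤ n, ∃ s ∈ Set.Icc (0 : ℝ) 1, ∃ t ∈ Set.Icc (0 : ℝ) 1,
      ω u = bpt n i s ∧ ω v = bpt n i t

/-- Condition (C2): `f` maps adjacent vertices of `G` to adjacent vertices of `C`. -/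
def CondC2 {V : Type*} (n : ℕ) (G : SimpleGraph V) (f : V → NOdVert) : Prop :=
  ∀ u v, G.Adj u v → nodAdj n (f u) (f v)

/-- `w 0, …, w k` is a wrapping pattern in `G` for the placement function `ω`. -/
def IsWrapping {V : Type*} (n : ℕ) (G : SimpleGraph V) (ω : V → ℝ × ℝ)
    (w : ℕ → V) (k : ℕ) : Prop :=
  0 < k ∧ 2 * (n + 1) ∣ k ∧
  (∀ p < k, G.Adj (w p) (w (p + 1))) ∧
  (∀ q, 2 * q ≤ k → ∃ t ∈ Set.Icc (0 : ℝ) 1, ω (w (2 * q)) = bpt n (q % (n + 1)) t) ∧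
  (∀ q, 2 * q + 1 ≤ k → ω (w (2 * q + 1)) = origin)

/-- The branch-star of `C`: the branch vertex together with `C(ℓ,1)`, `1 ≤ ℓ ≤ n`. -/
def branchStar (n : ℕ) : Set NOdVert :=
  {NOdVert.branch} ∪ {x | ∃ ℓ, 1 ≤ ℓ ∧ ℓ ≤ n ∧ x = NOdVert.node ℓ 1}


lemma bpt_ne_origin (n i : ℕ) {t : ℝ} (ht : t ≠ -1) : bpt n i t ≠ origin := by
  intro h
  simp only [bpt, origin, Prod.mk.injEq, mul_eq_zero] at h
  have h1t : (1 : ℝ) + t ≠ 0 := fun h' => ht (by linarith)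
  simpa [h.1.resolve_left h1t, h.2.resolve_left h1t] using Real.sin_sq_add_cos_sq (i * Real.pi / n)

lemma bpt_index_eq {n i j : ℕ} (hn : n ≠ 0) (hi : i ≤ n) (hj : j ≤ n) {s t : ℝ}
    (hs : -1 < s) (ht : -1 < t) (h : bpt n i s = bpt n j t) : i = j := by
  simp only [bpt, Prod.mk.injEq] at h
  obtain ⟨hcos, hsin⟩ := h
  set a := (i : ℝ) * Real.pi / n with ha
  set b := (j : ℝ) * Real.pi / n with hb
  -- both sides have squared norm `(1 + s) ^ 2` resp. `(1 + t) ^ 2`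
  have hsq : ((1 : ℝ) + s) ^ 2 = (1 + t) ^ 2 := by
    linear_combination ((1 + s) * Real.cos a + (1 + t) * Real.cos b) * hcos +
      ((1 + s) * Real.sin a + (1 + t) * Real.sin b) * hsin -
      (1 + s) ^ 2 * Real.sin_sq_add_cos_sq a + (1 + t) ^ 2 * Real.sin_sq_add_cos_sq b
  obtain rfl : s = t := by nlinarith
  have hcos_eq : Real.cos a = Real.cos b := mul_left_cancel₀ (by linarith) hcos
  have hangle : ∀ k ≤ n, (k : ℝ) * Real.pi / n ∈ Set.Icc 0 Real.pi := fun k hk => by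
    have hk' : (k : ℝ) ≤ n := by exact_mod_cast hk
    refine ⟨by positivity, ?_⟩
    rw [div_le_iff₀ (by positivity)]
    nlinarith [Real.pi_pos]
  have hab : a = b := Real.injOn_cos (hangle i hi) (hangle j hj) hcos_eq
  rw [ha, hb] at hab
  field_simp at hab
  exact_mod_cast hab

lemma nodAdj_branch_left {n : ℕ} {y : NOdVert} (h : nodAdj n .branch y) : y ∈ branchStar n := by
  obtain ⟨ℓ, j, hℓ1, hℓn, ⟨hx, hy⟩ | ⟨hy, hx⟩⟩ := h
  · obtain rfl : j = 0 := by by_contra hj; simp [cv, hj] at hx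
    exact Or.inr ⟨ℓ, hℓ1, hℓn, by simpa [cv] using hy⟩
  · simp [cv] at hx

lemma branchStar_eq_insert (n : ℕ) :
    branchStar n = insert .branch ((fun ℓ => .node ℓ 1) '' Set.Icc 1 n) := by
  ext x
  simp only [branchStar, Set.singleton_union, Set.mem_insert_iff, Set.mem_ofPred_eq,
    Set.mem_image, Set.mem_Icc]
  aesop

lemma ncard_branchStar (n : ℕ) : (branchStar n).ncard = n + 1 := by
  have hinj : Function.Injective (fun ℓ => NOdVert.node ℓ 1) := fun _ _ h => by injection h
  rw [branchStar_eq_insert, Set.ncard_insert_of_notMem (by simp)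
    ((Set.finite_Icc 1 n).image _), Set.ncard_image_of_injective _ hinj, Set.ncard_Icc_nat]
  omega

lemma branchStar_subset_range {n : ℕ} {g : Fin (n + 1) → NOdVert} (hg : Function.Injective g)
    (hmem : ∀ i, g i ∈ branchStar n) : branchStar n ⊆ Set.range g := by
  refine (Set.eq_of_subset_of_ncard_le (Set.range_subset_iff.2 hmem) ?_ ?_).ge
  · rw [ncard_branchStar, Set.ncard_range_of_injective hg, Nat.card_fin]
  · rw [branchStar_eq_insert]
    exact ((Set.finite_Icc 1 n).image _).insert _

section

variable {V : Type*} {n : ℕ}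

lemma IsPlacement.eq_origin_of_adj {G : SimpleGraph V} {ω : V → ℝ × ℝ} (hω : IsPlacement n G ω)
    {u v : V} (huv : G.Adj u v) (hu : ω u ≠ origin) : ω v = origin :=
  ((hω u v huv).resolve_left fun h => hu h.1).1

lemma CondC1.exists_eq_bpt {ω : V → ℝ × ℝ} {f : V → NOdVert} (h1 : CondC1 n ω f) (hn : n ≠ 0)
    {u v : V} (huv : f u = f v) {i : ℕ} (hi : i ≤ n) {s : ℝ} (hs : s ∈ Set.Icc (0 : ℝ) 1)
    (hu : ω u = bpt n i s) : ∃ t ∈ Set.Icc (0 : ℝ) 1, ω v = bpt n i t := by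
  rcases h1 u v huv with ⟨ho, -⟩ | ⟨j, hj, s', hs', t, ht, e1, e2⟩
  · exact absurd (hu.symm.trans ho) (bpt_ne_origin n i (by linarith [hs.1]))
  · obtain rfl := bpt_index_eq hn hi hj (by linarith [hs.1]) (by linarith [hs'.1])
      (hu.symm.trans e1)
    exact ⟨t, ht, e2⟩

end

theorem stmt6_general {V : Type*} (n : ℕ) (hn : 2 ≤ n) (G : SimpleGraph V)
    (hG : G.Connected) (ω : V → ℝ × ℝ) (hω : IsPlacement n G ω)
    (f : V → NOdVert) (h1 : CondC1 n ω f) (h2 : CondC2 n G f) :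
    ∃ i ≤ n, ∀ u : V, f u ∈ branchStar n →
      ∀ t ∈ Set.Icc (0 : ℝ) 1, ω u ≠ bpt n i t := by
  have hn0 : n ≠ 0 := by omega
  have hnt : Nontrivial (Fin (n + 1)) := Fin.nontrivial_iff_two_le.2 (by omega)
  by_contra! hcon
  choose u hu t ht hωu using fun i : Fin (n + 1) => hcon i i.is_le
  have hinj : Function.Injective (f ∘ u) := fun i j hij => by
    obtain ⟨t', ht', hj⟩ := h1.exists_eq_bpt hn0 hij i.is_le (ht i) (hωu i)
    exact Fin.ext (bpt_index_eq hn0 i.is_le j.is_le (by linarith [ht'.1]) (by linarith [(ht j).1])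
      (hj.symm.trans (hωu j)))
  have hcover := branchStar_subset_range hinj hu
  have hray : ∀ i, ω (u i) ≠ origin := fun i => (hωu i).trans_ne
    (bpt_ne_origin n i (by linarith [(ht i).1]))
  obtain ⟨b, hb : f (u b) = .branch⟩ := hcover (Or.inl rfl)
  obtain ⟨c, hcb⟩ := exists_ne b
  have : Nontrivial V := nontrivial_of_ne (u c) (u b) fun h => hcb (hinj (congrArg f h))
  obtain ⟨v, hadj⟩ := hG.preconnected.exists_adj_of_nontrivial (u b)
  have hv : ω v = origin := hω.eq_origin_of_adj hadj (hray b)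
  obtain ⟨d, hd⟩ := hcover (nodAdj_branch_left (hb ▸ h2 _ _ hadj))
  obtain ⟨t', ht', hωv⟩ := h1.exists_eq_bpt hn0 hd d.is_le (ht d) (hωu d)
  exact bpt_ne_origin n d (by linarith [ht'.1]) (hωv.symm.trans hv)

theorem stmt6 {V : Type*} [Fintype V] (n : ℕ) (hn : 2 ≤ n) (G : SimpleGraph V)
    (hG : G.Connected) (ω : V → ℝ × ℝ) (hω : IsPlacement n G ω)
    (f : V → NOdVert) (h1 : CondC1 n ω f) (h2 : CondC2 n G f) :
    ∃ i ≤ n, ∀ u : V, f u ∈ branchStar n →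
      ∀ t ∈ Set.Icc (0 : ℝ) 1, ω u ≠ bpt n i t :=
  stmt6_general n hn G hG ω hω f h1 h2
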